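/- Let A ⊂ L^∞ be a norm-closed convex acceptance set containing 0, fix a position X with X_0 > 0, and let S^1, S^2 be eligible assets with equal initial price P = S^1_0 = S^2_0. Then for every α ∈ [0,1], R_{A, αS^1 + (1−α)S^2}(X) ≤ max{ R_{A,S^1}(X), R_{A,S^2}(X) }, where αS^1 + (1−α)S^2 = (P, αS^1_T + (1−α)S^2_T). -/
import Mathlib


open MeasureTheory

/-- The set of percentages making the combined position acceptable. -/
def IRset {Ω : Type*} [MeasurableSpace Ω] {μ : Measure Ω}
    (A : Set (Lp ℝ ⊤ μ)) (S0 X0 : ℝ) (ST XT : Lp ℝ ⊤ μ) : Set ℝ :=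
  {l : ℝ | l ∈ Set.Icc (0 : ℝ) 1 ∧ (1 - l) • XT + l • ((X0 / S0) • ST) ∈ A}

/-- The intrinsic risk measure. -/
noncomputable def IR {Ω : Type*} [MeasurableSpace Ω] {μ : Measure Ω}
    (A : Set (Lp ℝ ⊤ μ)) (S0 X0 : ℝ) (ST XT : Lp ℝ ⊤ μ) : ℝ :=
  sInf (IRset A S0 X0 ST XT)

theorem stmt16 {Ω : Type*} [MeasurableSpace Ω] (μ : Measure Ω) [IsProbabilityMeasure μ]
    (A : Set (Lp ℝ ⊤ μ)) (hne : A.Nonempty) (hproper : A ≠ Set.univ)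
    (hmono : ∀ X ∈ A, ∀ Y : Lp ℝ ⊤ μ, X ≤ Y → Y ∈ A)
    (hclosed : IsClosed A) (hconv : Convex ℝ A) (h0 : (0 : Lp ℝ ⊤ μ) ∈ A)
    (X0 : ℝ) (hX0 : 0 < X0) (XT : Lp ℝ ⊤ μ)
    (P : ℝ) (hP : 0 < P) (S1T S2T : Lp ℝ ⊤ μ)
    (hS1A : S1T ∈ A) (hS1 : 0 ≤ S1T) (hS2A : S2T ∈ A) (hS2 : 0 ≤ S2T)
    (α : ℝ) (hα : α ∈ Set.Icc (0 : ℝ) 1) :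
    IR A P X0 (α • S1T + (1 - α) • S2T) XT ≤
      max (IR A P X0 S1T XT) (IR A P X0 S2T XT) := by
  have hcpos : 0 < X0 / P := div_pos hX0 hP
  -- scaled eligible assets are acceptable
  have hscale : ∀ S : Lp ℝ ⊤ μ, S ∈ A → 0 ≤ S → (X0 / P) • S ∈ A := by
    intro S hSA hS
    rcases le_or_gt (X0 / P) 1 with h | h
    · have hx : (X0 / P) • S + (1 - X0 / P) • (0 : Lp ℝ ⊤ μ) ∈ A :=
        hconv hSA h0 hcpos.le (by linarith) (by ring)
      simpa using hx
    · apply hmono S hSA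
      have h1 : 0 ≤ (X0 / P - 1) • S := by
        rw [← Lp.coeFn_nonneg] at hS ⊢
        filter_upwards [hS, Lp.coeFn_smul (X0 / P - 1) S] with ω hω1 hω2
        rw [hω2]
        exact mul_nonneg (by linarith) hω1
      have h2 : (X0 / P) • S - S = (X0 / P - 1) • S := by
        rw [sub_smul, one_smul]
      exact sub_nonneg.mp (h2 ▸ h1)
  -- upward closedness of IRset
  have hup : ∀ ST : Lp ℝ ⊤ μ, (X0 / P) • ST ∈ A →
      ∀ l ∈ IRset A P X0 ST XT, ∀ l', l ≤ l' → l' ≤ 1 →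
      l' ∈ IRset A P X0 ST XT := by
    intro ST hcS l hl l' hll' hl'1
    obtain ⟨⟨hl0, hl1⟩, hA⟩ := hl
    refine ⟨⟨le_trans hl0 hll', hl'1⟩, ?_⟩
    rcases eq_or_lt_of_le hl1 with heq | hlt
    · have hl'eq : l' = 1 := le_antisymm hl'1 (heq ▸ hll')
      have : l = l' := by rw [heq, hl'eq]
      rwa [← this]
    · set t := (1 - l') / (1 - l) with ht
      have hden : 0 < 1 - l := by linarith
      have ht0 : 0 ≤ t := div_nonneg (by linarith) hden.le
      have ht1 : t ≤ 1 := by rw [div_le_one hden]; linarith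
      have hcomb : t • ((1 - l) • XT + l • ((X0 / P) • ST)) +
          (1 - t) • ((X0 / P) • ST) ∈ A := hconv hA hcS ht0 (by linarith) (by ring)
      have hne' : (1 : ℝ) - l ≠ 0 := hden.ne'
      have hid : (1 - l') • XT + l' • ((X0 / P) • ST) =
          t • ((1 - l) • XT + l • ((X0 / P) • ST)) + (1 - t) • ((X0 / P) • ST) := by
        rw [ht]
        match_scalars <;> (field_simp; try ring)
      rw [hid]
      exact hcomb
  have hS1c : (X0 / P) • S1T ∈ A := hscale S1T hS1A hS1
  have hS2c : (X0 / P) • S2T ∈ A := hscale S2T hS2A hS2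
  -- IRsets are nonempty (contain 1), bounded below, and closed
  have hone : ∀ ST : Lp ℝ ⊤ μ, (X0 / P) • ST ∈ A → (1 : ℝ) ∈ IRset A P X0 ST XT := by
    intro ST hcS
    refine ⟨⟨zero_le_one, le_refl 1⟩, ?_⟩
    simpa using hcS
  have hbdd : ∀ ST : Lp ℝ ⊤ μ, BddBelow (IRset A P X0 ST XT) :=
    fun ST => ⟨0, fun x hx => hx.1.1⟩
  have hcl : ∀ ST : Lp ℝ ⊤ μ, IsClosed (IRset A P X0 ST XT) := by
    intro ST
    have heq : IRset A P X0 ST XT =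
        Set.Icc (0:ℝ) 1 ∩ (fun l : ℝ => (1 - l) • XT + l • ((X0 / P) • ST)) ⁻¹' A := rfl
    rw [heq]
    refine isClosed_Icc.inter (hclosed.preimage ?_)
    exact ((continuous_const.sub continuous_id).smul continuous_const).add
      (continuous_id.smul continuous_const)
  have h1mem : sInf (IRset A P X0 S1T XT) ∈ IRset A P X0 S1T XT :=
    (hcl S1T).csInf_mem ⟨1, hone S1T hS1c⟩ (hbdd S1T)
  have h2mem : sInf (IRset A P X0 S2T XT) ∈ IRset A P X0 S2T XT :=
    (hcl S2T).csInf_mem ⟨1, hone S2T hS2c⟩ (hbdd S2T)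
  set m := max (IR A P X0 S1T XT) (IR A P X0 S2T XT) with hm
  have hm1 : m ≤ 1 := max_le h1mem.1.2 h2mem.1.2
  have hmem1 : m ∈ IRset A P X0 S1T XT :=
    hup S1T hS1c _ h1mem m (le_max_left _ _) hm1
  have hmem2 : m ∈ IRset A P X0 S2T XT :=
    hup S2T hS2c _ h2mem m (le_max_right _ _) hm1
  have hmemC : m ∈ IRset A P X0 (α • S1T + (1 - α) • S2T) XT := by
    refine ⟨hmem1.1, ?_⟩
    have hcomb : α • ((1 - m) • XT + m • ((X0 / P) • S1T)) +
        (1 - α) • ((1 - m) • XT + m • ((X0 / P) • S2T)) ∈ A :=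
      hconv hmem1.2 hmem2.2 hα.1 (by linarith [hα.2]) (by ring)
    have hid : (1 - m) • XT + m • ((X0 / P) • (α • S1T + (1 - α) • S2T)) =
        α • ((1 - m) • XT + m • ((X0 / P) • S1T)) +
        (1 - α) • ((1 - m) • XT + m • ((X0 / P) • S2T)) := by
      match_scalars <;> ring
    rw [hid]
    exact hcomb
  exact csInf_le (hbdd _) hmemC
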